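/- Let Γ be a finite simplicial graph with vertex set V such that Z = {v ∈ V : st(v) = V} is non-empty, and let A = A(Γ). Suppose π_{a,K} and π_{b,L} are partial conjugations with a ∉ L, b ∈ K, and K ∩ L = ∅. Then L is a connected component of Γ∖st(a) (so π_{a,L} is a partial conjugation), and the automorphisms π_{a,K}π_{a,L} and π_{b,L} commute in Aut(A). -/

import Mathlib

open SimpleGraph

/-- The star of a vertex: the vertex together with its neighbours. -/
def Gstar {V : Type} (Γ : SimpleGraph V) (a : V) : Set V := insert a (Γ.neighborSet a)

/-- The set of vertices whose star is the whole vertex set. -/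
def Zset {V : Type} (Γ : SimpleGraph V) : Set V := {v | Gstar Γ v = Set.univ}

/-- `K` is (the vertex set of) a connected component of the full subgraph of `Γ`
induced on the vertex set `S`. -/
def IsCompOf {V : Type} (Γ : SimpleGraph V) (S K : Set V) : Prop :=
  ∃ c : (Γ.induce S).ConnectedComponent, K = Subtype.val '' c.supp

/-- The defining relators of the right-angled Artin group of `Γ`. -/
def raagRels {V : Type} (Γ : SimpleGraph V) : Set (FreeGroup V) :=
  {r | ∃ a b : V, Γ.Adj a b ∧
    r = FreeGroup.of a * FreeGroup.of b * (FreeGroup.of a)⁻¹ * (FreeGroup.of b)⁻¹}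

/-- The right-angled Artin group `A(Γ)`. -/
abbrev RAAG {V : Type} (Γ : SimpleGraph V) : Type := PresentedGroup (raagRels Γ)

/-- The generator of `A(Γ)` corresponding to a vertex `v`. -/
def raagGen {V : Type} (Γ : SimpleGraph V) (v : V) : RAAG Γ := PresentedGroup.of v

/-- The pure symmetric automorphism group: automorphisms sending each standard
generator to a conjugate of itself. -/
def PSA {V : Type} (Γ : SimpleGraph V) : Subgroup (MulAut (RAAG Γ)) where
  carrier := {φ | ∀ v : V, IsConj (raagGen Γ v) (φ (raagGen Γ v))}
  one_mem' := fun v => IsConj.refl _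
  mul_mem' := by
    intro φ ψ hφ hψ v
    have h2 : IsConj (φ (raagGen Γ v)) (φ (ψ (raagGen Γ v))) :=
      φ.toMonoidHom.map_isConj (hψ v)
    simpa [MulAut.mul_apply] using (hφ v).trans h2
  inv_mem' := by
    intro φ hφ v
    have h := (φ⁻¹ : MulAut (RAAG _)).toMonoidHom.map_isConj (hφ v)
    simp only [MulEquiv.toMonoidHom_eq_coe, MonoidHom.coe_coe, MulAut.inv_def,
      MulEquiv.symm_apply_apply] at h
    exact h.symm

/-- `φ` is the partial conjugation `π_{a,K}`. -/
def IsPartialConj {V : Type} (Γ : SimpleGraph V) (a : V) (K : Set V)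
    (φ : MulAut (RAAG Γ)) : Prop :=
  IsCompOf Γ (Gstar Γ a)ᶜ K ∧
  (∀ v ∈ K, φ (raagGen Γ v) = (raagGen Γ a)⁻¹ * raagGen Γ v * raagGen Γ a) ∧
  (∀ v ∉ K, φ (raagGen Γ v) = raagGen Γ v)

/-- Combinatorial data (acting letter, domain) of the partial conjugations. -/
def PCSet {V : Type} (Γ : SimpleGraph V) : Set (V × Set V) :=
  {p | IsCompOf Γ (Gstar Γ p.1)ᶜ p.2}

/-- A non-trivial admissible partition (for p-sets). -/
def IsAdmissiblePartition {V : Type} (Q₁ Q₂ : Set (V × Set V)) : Prop :=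
  Disjoint Q₁ Q₂ ∧ Q₁.Nonempty ∧ Q₂.Nonempty ∧
    ∀ p ∈ Q₁, ∀ q ∈ Q₂, p.1 ∈ q.2 ∧ q.1 ∈ p.2

/-- A p-set of partial conjugations. -/
def IsPSet {V : Type} (Γ : SimpleGraph V) (Q : Set (V × Set V)) : Prop :=
  Q ⊆ PCSet Γ ∧
  (∀ a : V, {p ∈ Q | p.1 = a}.Subsingleton) ∧
  ∃ Q₁ Q₂ : Set (V × Set V), Q₁ ∪ Q₂ = Q ∧ IsAdmissiblePartition Q₁ Q₂

/-- A non-trivial admissible partition (for δ-p-sets). -/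
def IsDeltaAdmissiblePartition {V : Type} (Q₁ Q₂ : Set (V × Set V)) : Prop :=
  Disjoint Q₁ Q₂ ∧ Q₁.Nonempty ∧ Q₂.Nonempty ∧
    ∀ p ∈ Q₁, ∀ q ∈ Q₂, p.1 ∈ q.2 ∨ q.1 ∈ p.2 ∨ p.2 = q.2

/-- A δ-p-set of partial conjugations. -/
def IsDeltaPSet {V : Type} (Γ : SimpleGraph V) (Q : Set (V × Set V)) : Prop :=
  Q ⊆ PCSet Γ ∧
  (∀ a : V, a ∉ Zset Γ →
    ({p ∈ Q | p.1 = a}.ncard = 0 ∨ {p ∈ Q | p.1 = a}.ncard = 2)) ∧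
  ∃ Q₁ Q₂ : Set (V × Set V), Q₁ ∪ Q₂ = Q ∧ IsDeltaAdmissiblePartition Q₁ Q₂

/-- `Γ` has a separating intersection of links. -/
def HasSIL {V : Type} (Γ : SimpleGraph V) : Prop :=
  ∃ a b : V, a ≠ b ∧ ¬Γ.Adj a b ∧
    ∃ M : Set V, IsCompOf Γ (Γ.neighborSet a ∩ Γ.neighborSet b)ᶜ M ∧ a ∉ M ∧ b ∉ M

/-- The full subgraph spanned by `U` is dominating. -/
def Dominating {V : Type} (Γ : SimpleGraph V) (U : Set V) : Prop :=
  ∀ v : V, v ∈ U ∨ ∃ u ∈ U, Γ.Adj v u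

/-- The full subgraph spanned by `U` is disconnected or non-dominating. -/
def Missing {V : Type} (Γ : SimpleGraph V) (U : Set V) : Prop :=
  ¬(Γ.induce U).Connected ∨ ¬Dominating Γ U

/-!
Write `st(x)` for `Gstar Γ x`. Since `b ∈ K` lies outside `st(a)`, also `a ∉ st(b)`; as `a ∉ L`,
no vertex of `L` is adjacent to `a`, so `L ⊆ Γ∖st(a)`. A vertex `w ∉ st(a) ∪ L` adjacent to `L`
would lie in `lk(b)`, hence in `K`, and would then drag its neighbour in `L` into `K`, contradicting
`K ∩ L = ∅`. So the connected set `L` is a component of `Γ∖st(a)`.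

`π_{a,L}` respects the relators because every neighbour of `L` outside `L` lies in `lk(a)`, so
commutes with `a`. The commutation is checked on generators: both products conjugate `v ∈ L`
by `ba` and `v ∈ K` by `a`, and fix every other generator.
-/

namespace IsCompOf

variable {V : Type} {Γ : SimpleGraph V} {S K : Set V}

lemma subset (h : IsCompOf Γ S K) : K ⊆ S := by
  obtain ⟨C, rfl⟩ := h
  rintro _ ⟨v, -, rfl⟩
  exact v.2

lemma mem_of_adj (h : IsCompOf Γ S K) {u w : V} (hu : u ∈ K) (hw : w ∈ S)
    (huw : Γ.Adj u w) : w ∈ K := by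
  obtain ⟨C, rfl⟩ := h
  obtain ⟨u', hu'C, rfl⟩ := hu
  exact ⟨⟨w, hw⟩, C.mem_supp_of_adj_mem_supp hu'C huw, rfl⟩

lemma notMem_of_compl_gstar {a : V} (h : IsCompOf Γ (Gstar Γ a)ᶜ K) : a ∉ K :=
  fun ha => h.subset ha (Set.mem_insert a _)

lemma connected_induce (h : IsCompOf Γ S K) : (Γ.induce K).Connected := by
  obtain ⟨C, rfl⟩ := h
  let f : C.toSimpleGraph →g Γ.induce (Subtype.val '' C.supp) :=
    { toFun := fun x => ⟨x.1.1, x.1, x.2, rfl⟩, map_rel' := id }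
  obtain ⟨v, hv⟩ := C.nonempty_supp
  have : Nonempty (Subtype.val '' C.supp) := ⟨⟨v.1, v, hv, rfl⟩⟩
  refine ⟨fun ⟨_, x, hx, hxv⟩ ⟨_, y, hy, hyv⟩ => ?_⟩
  subst hxv hyv
  exact (C.reachable_toSimpleGraph hx hy).map f

end IsCompOf

variable {V : Type} {Γ : SimpleGraph V}

lemma isCompOf_of_connected_induce {K T : Set V} (hK : (Γ.induce K).Connected) (hKT : K ⊆ T)
    (hclosed : ∀ u ∈ K, ∀ w ∈ T, Γ.Adj u w → w ∈ K) : IsCompOf Γ T K := by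
  obtain ⟨v₀, hv₀⟩ := hK.nonempty
  refine ⟨(Γ.induce T).connectedComponentMk ⟨v₀, hKT hv₀⟩, Set.ext fun v => ⟨fun hv => ?_, ?_⟩⟩
  · refine ⟨⟨v, hKT hv⟩, ConnectedComponent.sound ?_, rfl⟩
    exact ((hK.preconnected ⟨v, hv⟩ ⟨v₀, hv₀⟩).map (Γ.induceHomOfLE hKT).toHom)
  · rintro ⟨w, hw, rfl⟩
    have hreach := ConnectedComponent.exact ((ConnectedComponent.mem_supp_iff _ _).mp hw).symm
    rw [reachable_iff_reflTransGen] at hreach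
    clear hw
    induction hreach with
    | refl => exact hv₀
    | tail _ hadj ih => exact hclosed _ ih _ (Subtype.property _) hadj

lemma mem_compl_gstar {a v : V} : v ∈ (Gstar Γ a)ᶜ ↔ v ≠ a ∧ ¬Γ.Adj a v := by
  simp [Gstar, not_or]

lemma mem_compl_gstar_comm {a b : V} : a ∈ (Gstar Γ b)ᶜ ↔ b ∈ (Gstar Γ a)ᶜ := by
  simp only [mem_compl_gstar, ne_comm, Γ.adj_comm]

lemma IsCompOf.adj_of_adj_of_notMem {a x y : V} {L : Set V}
    (hL : IsCompOf Γ (Gstar Γ a)ᶜ L) (hx : x ∈ L) (hxy : Γ.Adj x y) (hy : y ∉ L) :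
    Γ.Adj a y := by
  have hyst : y ∉ (Gstar Γ a)ᶜ := fun h => hy (hL.mem_of_adj hx h hxy)
  have hxa : ¬Γ.Adj a x := (mem_compl_gstar.mp (hL.subset hx)).2
  rw [mem_compl_gstar, not_and_or, not_not, not_not] at hyst
  exact hyst.resolve_left fun hya => hxa (hya ▸ hxy.symm)

lemma IsCompOf.compl_gstar_of_disjoint {a b : V} {K L : Set V}
    (hK : IsCompOf Γ (Gstar Γ a)ᶜ K) (hL : IsCompOf Γ (Gstar Γ b)ᶜ L)
    (haL : a ∉ L) (hbK : b ∈ K) (hKL : K ∩ L = ∅) :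
    IsCompOf Γ (Gstar Γ a)ᶜ L := by
  have hab : a ∈ (Gstar Γ b)ᶜ := mem_compl_gstar_comm.mpr (hK.subset hbK)
  have hLa : L ⊆ (Gstar Γ a)ᶜ := fun v hv =>
    mem_compl_gstar.mpr ⟨fun h => haL (h ▸ hv), fun h => haL (hL.mem_of_adj hv hab h.symm)⟩
  refine isCompOf_of_connected_induce hL.connected_induce hLa fun u hu w hw huw => ?_
  by_contra hwL
  have hwK : w ∈ K := hK.mem_of_adj hbK hw (hL.adj_of_adj_of_notMem hu huw hwL)
  exact (Set.eq_empty_iff_forall_notMem.mp hKL) u ⟨hK.mem_of_adj hwK (hLa hu) huw.symm, hu⟩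

lemma commute_raagGen_of_adj {x y : V} (h : Γ.Adj x y) :
    Commute (raagGen Γ x) (raagGen Γ y) := by
  rw [← commutatorElement_eq_one_iff_commute, commutatorElement_def]
  have hrel := PresentedGroup.one_of_mem (rels := raagRels Γ) ⟨x, y, h, rfl⟩
  simp only [map_mul, map_inv] at hrel
  exact hrel

open Classical in
noncomputable def partialConjFun (L : Set V) (c : RAAG Γ) (v : V) : RAAG Γ :=
  if v ∈ L then c⁻¹ * raagGen Γ v * c else raagGen Γ v

section PartialConj

variable {a : V} {L : Set V}

lemma partialConjFun_of_mem {c : RAAG Γ} {v : V} (hv : v ∈ L) :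
    partialConjFun L c v = c⁻¹ * raagGen Γ v * c := if_pos hv

lemma partialConjFun_of_notMem {c : RAAG Γ} {v : V} (hv : v ∉ L) :
    partialConjFun L c v = raagGen Γ v := if_neg hv

lemma partialConjFun_eq_conj_of_adj (hL : IsCompOf Γ (Gstar Γ a)ᶜ L) {c : RAAG Γ}
    (hc : ∀ y, Γ.Adj a y → Commute c (raagGen Γ y)) {x y : V} (hx : x ∈ L) (hxy : Γ.Adj x y) :
    partialConjFun L c y = c⁻¹ * raagGen Γ y * c := by
  by_cases hy : y ∈ L
  · exact partialConjFun_of_mem hy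
  · rw [partialConjFun_of_notMem hy, mul_assoc, ← (hc y (hL.adj_of_adj_of_notMem hx hxy hy)).eq,
      inv_mul_cancel_left]

lemma commute_partialConjFun_of_adj (hL : IsCompOf Γ (Gstar Γ a)ᶜ L) {c : RAAG Γ}
    (hc : ∀ y, Γ.Adj a y → Commute c (raagGen Γ y)) {x y : V} (hxy : Γ.Adj x y) :
    Commute (partialConjFun L c x) (partialConjFun L c y) := by
  have hconj : Commute (c⁻¹ * raagGen Γ x * c) (c⁻¹ * raagGen Γ y * c) := by
    simpa using (Commute.conj_iff c⁻¹).mpr (commute_raagGen_of_adj hxy)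
  by_cases hx : x ∈ L
  · rwa [partialConjFun_eq_conj_of_adj hL hc hx hxy, partialConjFun_of_mem hx]
  by_cases hy : y ∈ L
  · rwa [partialConjFun_eq_conj_of_adj hL hc hy hxy.symm, partialConjFun_of_mem hy]
  rw [partialConjFun_of_notMem hx, partialConjFun_of_notMem hy]
  exact commute_raagGen_of_adj hxy

/-- The `n`-th power of the partial conjugation `π_{a,L}`. -/
noncomputable def partialConjHom (hL : IsCompOf Γ (Gstar Γ a)ᶜ L) (n : ℤ) : RAAG Γ →* RAAG Γ :=
  PresentedGroup.toGroup (f := partialConjFun L (raagGen Γ a ^ n)) <| by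
    rintro r ⟨x, y, hxy, rfl⟩
    have hc y (hy : Γ.Adj a y) := (commute_raagGen_of_adj hy).zpow_left n
    simpa [commutatorElement_def] using
      commutatorElement_eq_one_iff_commute.mpr (commute_partialConjFun_of_adj hL hc hxy)

lemma partialConjHom_raagGen (hL : IsCompOf Γ (Gstar Γ a)ᶜ L) (n : ℤ) (v : V) :
    partialConjHom hL n (raagGen Γ v) = partialConjFun L (raagGen Γ a ^ n) v :=
  PresentedGroup.toGroup.of _

lemma partialConjHom_comp (hL : IsCompOf Γ (Gstar Γ a)ᶜ L) (m n : ℤ) :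
    (partialConjHom hL m).comp (partialConjHom hL n) = partialConjHom hL (n + m) := by
  have haL : a ∉ L := hL.notMem_of_compl_gstar
  refine PresentedGroup.ext fun v => ?_
  change partialConjHom hL m (partialConjHom hL n (raagGen Γ v)) =
    partialConjHom hL (n + m) (raagGen Γ v)
  by_cases hv : v ∈ L
  · simp only [partialConjHom_raagGen, partialConjFun_of_mem hv, map_mul, map_inv, map_zpow,
      partialConjFun_of_notMem haL]
    group
  · simp only [partialConjHom_raagGen, partialConjFun_of_notMem hv]

lemma partialConjHom_zero (hL : IsCompOf Γ (Gstar Γ a)ᶜ L) :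
    partialConjHom hL 0 = MonoidHom.id _ :=
  PresentedGroup.ext fun v => by
    change partialConjHom hL 0 (raagGen Γ v) = raagGen Γ v
    by_cases hv : v ∈ L <;> simp [partialConjHom_raagGen, partialConjFun, hv]

noncomputable def partialConj (hL : IsCompOf Γ (Gstar Γ a)ᶜ L) : MulAut (RAAG Γ) :=
  MonoidHom.toMulEquiv (partialConjHom hL 1) (partialConjHom hL (-1))
    (by rw [partialConjHom_comp, add_neg_cancel, partialConjHom_zero])
    (by rw [partialConjHom_comp, neg_add_cancel, partialConjHom_zero])

lemma isPartialConj_partialConj (hL : IsCompOf Γ (Gstar Γ a)ᶜ L) :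
    IsPartialConj Γ a L (partialConj hL) := by
  refine ⟨hL, fun v hv => ?_, fun v hv => ?_⟩ <;>
  change partialConjHom hL 1 (raagGen Γ v) = _ <;>
  simp [partialConjHom_raagGen, partialConjFun, hv]

end PartialConj

lemma mulAut_ext_raagGen {φ ψ : MulAut (RAAG Γ)} (h : ∀ v, φ (raagGen Γ v) = ψ (raagGen Γ v)) :
    φ = ψ :=
  MulEquiv.toMonoidHom_injective (PresentedGroup.ext h)

lemma commute_mul_of_isPartialConj {a b : V} {K L : Set V} {φ φ' ψ : MulAut (RAAG Γ)}
    (hφ : IsPartialConj Γ a K φ) (hφ' : IsPartialConj Γ a L φ') (hψ : IsPartialConj Γ b L ψ)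
    (haL : a ∉ L) (hbK : b ∈ K) (hKL : K ∩ L = ∅) :
    Commute (φ * φ') ψ := by
  have haK : a ∉ K := hφ.1.notMem_of_compl_gstar
  have hbL : b ∉ L := hψ.1.notMem_of_compl_gstar
  obtain ⟨-, hφK, hφn⟩ := hφ
  obtain ⟨-, hφ'L, hφ'n⟩ := hφ'
  obtain ⟨-, hψL, hψn⟩ := hψ
  refine mulAut_ext_raagGen fun v => ?_
  simp only [MulAut.mul_apply]
  by_cases hvL : v ∈ L
  · have hvK : v ∉ K := fun hvK => (Set.eq_empty_iff_forall_notMem.mp hKL) v ⟨hvK, hvL⟩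
    simp only [hψL v hvL, hφ'L v hvL, map_mul, map_inv, hφ'n b hbL, hφK b hbK, hφn a haK,
      hφn v hvK, hψn a haL]
    group
  by_cases hvK : v ∈ K
  · simp only [hψn v hvL, hφ'n v hvL, hφK v hvK, map_mul, map_inv, hψn a haL]
  · simp only [hψn v hvL, hφ'n v hvL, hφn v hvK]

theorem new_pc_and_commute_general {V : Type} (Γ : SimpleGraph V)
    (a b : V) (K L : Set V) (φ ψ : MulAut (RAAG Γ))
    (hφ : IsPartialConj Γ a K φ) (hψ : IsPartialConj Γ b L ψ)
    (haL : a ∉ L) (hbK : b ∈ K) (hKL : K ∩ L = ∅) :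
    IsCompOf Γ (Gstar Γ a)ᶜ L ∧
      ∃ φ' : MulAut (RAAG Γ), IsPartialConj Γ a L φ' ∧ Commute (φ * φ') ψ := by
  have hLa : IsCompOf Γ (Gstar Γ a)ᶜ L := hφ.1.compl_gstar_of_disjoint hψ.1 haL hbK hKL
  exact ⟨hLa, partialConj hLa, isPartialConj_partialConj hLa,
    commute_mul_of_isPartialConj hφ (isPartialConj_partialConj hLa) hψ haL hbK hKL⟩

/-- Lemma 3.4. If `π_{a,K}`, `π_{b,L}` are partial conjugations with
`a ∉ L`, `b ∈ K`, `K ∩ L = ∅`, then `L` is also a connected component of `Γ∖st(a)`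
(so `π_{a,L}` is a partial conjugation), and `π_{a,K}π_{a,L}` commutes with `π_{b,L}`. -/
theorem new_pc_and_commute {V : Type} [Fintype V] (Γ : SimpleGraph V)
    (hZ : (Zset Γ).Nonempty) (a b : V) (K L : Set V) (φ ψ : MulAut (RAAG Γ))
    (hφ : IsPartialConj Γ a K φ) (hψ : IsPartialConj Γ b L ψ)
    (haL : a ∉ L) (hbK : b ∈ K) (hKL : K ∩ L = ∅) :
    IsCompOf Γ (Gstar Γ a)ᶜ L ∧
      ∃ φ' : MulAut (RAAG Γ), IsPartialConj Γ a L φ' ∧ Commute (φ * φ') ψ :=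
  new_pc_and_commute_general Γ a b K L φ ψ hφ hψ haL hbK hKL
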